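/- Let F ∈ ℂ[x₀,…,xₙ] be a nonzero homogeneous cubic polynomial whose singular locus in ℙⁿ has codimension 1. Then F = L²·M for some linear forms L, M ∈ ℂ[x₀,…,xₙ]. Conversely, any F = L²M with L, M linearly independent linear forms has singular locus of codimension exactly 1. Hence the cubics of symmetric geometric rank 1 are exactly the points of the tangential variety of the third Veronese variety. -/

import Mathlib

/-! If the Jacobian ideal of `F` has height one, it lies in a height-one prime, which in the UFD
`ℂ[x₀,…,xₙ]` is principal, say `(g)` with `g` prime. So `g` divides every partial derivative of
`F`, hence `F` itself by Euler's identity. Writing `F = g q`,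
the relation `∂ᵢF = ∂ᵢg · q + g · ∂ᵢq` with `∂ᵢg ≠ 0` of lower degree than `g` forces `g ∣ q`, so
`F = g² M`, and comparing degrees gives `deg g = deg M = 1`; both factors are homogeneous because
the lowest and highest degrees of a product over a domain add up. Conversely, the Jacobian ideal of
`L² M` is a nonzero ideal contained in `(L)`, which has height one by Krull's principal ideal
theorem. -/

open MvPolynomial

/-- The height (codimension) of an ideal: the infimum of the heights of the primes
containing it.  For an ideal `I` of a polynomial ring this is the codimension of the
affine zero locus `V(I)`. -/
noncomputable def idealHeight {R : Type*} [CommRing R] (I : Ideal R) : ℕ∞ :=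
  ⨅ p : {p : PrimeSpectrum R // I ≤ p.asIdeal}, Order.height p.1

/-- The Jacobian ideal of a polynomial: the ideal generated by all its first partial
derivatives.  Its zero locus is the (affine cone over the) singular locus. -/
noncomputable def jacobianIdeal {σ : Type*} (F : MvPolynomial σ ℂ) :
    Ideal (MvPolynomial σ ℂ) :=
  Ideal.span (Set.range fun i => pderiv i F)

/-- The symmetric geometric rank of (the symmetric tensor corresponding to) a
homogeneous polynomial: the codimension of its singular locus. -/
noncomputable def SGR {σ : Type*} (F : MvPolynomial σ ℂ) : ℕ∞ :=
  idealHeight (jacobianIdeal F)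

theorem idealHeight_eq_height {R : Type*} [CommRing R] (I : Ideal R) :
    idealHeight I = I.height := by
  refine le_antisymm ?_ ?_
  · rw [Ideal.height_eq_inf_minimalPrimes]
    refine le_iInf₂ fun J hJ => ?_
    exact iInf_le_of_le ⟨⟨J, hJ.1.1⟩, hJ.1.2⟩ (PrimeSpectrum.height_eq_orderHeight _).ge
  · refine le_iInf fun p => ?_
    rw [← PrimeSpectrum.height_eq_orderHeight]
    exact Ideal.height_mono p.2

theorem Ideal.exists_prime_forall_dvd_of_height_eq_one {R : Type*} [CommRing R] [IsDomain R]
    [UniqueFactorizationMonoid R] {I : Ideal R} (hI : I.height = 1) :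
    ∃ g : R, Prime g ∧ ∀ x ∈ I, g ∣ x := by
  obtain ⟨p, hp, hIp, hp1⟩ := Ideal.exists_isPrime_height_eq (n := 1) (by exact_mod_cast hI)
  replace hp1 : p.height = 1 := by exact_mod_cast hp1
  obtain ⟨g, hgp, hg⟩ := hp.exists_mem_prime_of_ne_bot (Ideal.ne_bot_of_height_eq_one hp1)
  refine ⟨g, hg, fun x hx => Ideal.mem_span_singleton.mp ?_⟩
  rw [← Ideal.eq_span_singleton_of_height_eq_one hp1 hgp hg]
  exact hIp hx

namespace MvPolynomial

variable {σ : Type*}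

theorem isUnit_iff_totalDegree_eq_zero {K : Type*} [Field K] {φ : MvPolynomial σ K}
    (hφ : φ ≠ 0) : IsUnit φ ↔ φ.totalDegree = 0 := by
  rw [isUnit_iff_totalDegree_of_isReduced]
  refine ⟨And.right, fun h => ⟨isUnit_iff_ne_zero.mpr fun h0 => hφ ?_, h⟩⟩
  rw [totalDegree_eq_zero_iff_eq_C.mp h, h0, C_0]

theorem totalDegree_ne_zero_of_prime {K : Type*} [Field K] {g : MvPolynomial σ K}
    (hg : Prime g) : g.totalDegree ≠ 0 :=
  (isUnit_iff_totalDegree_eq_zero hg.ne_zero).not.mp hg.not_isUnit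

section Factors

variable {R : Type*} [CommSemiring R]

theorem order_coe_le_totalDegree {φ : MvPolynomial σ R} (hφ : φ ≠ 0) :
    (φ : MvPowerSeries σ R).order ≤ φ.totalDegree := by
  obtain ⟨d, hd⟩ := exists_coeff_ne_zero hφ
  calc (φ : MvPowerSeries σ R).order ≤ d.degree := MvPowerSeries.order_le (by rwa [coeff_coe])
    _ ≤ φ.totalDegree := by exact_mod_cast le_totalDegree (mem_support_iff.mpr hd)

theorem IsHomogeneous.order_coe {φ : MvPolynomial σ R} {n : ℕ} (hφ : φ.IsHomogeneous n)
    (h0 : φ ≠ 0) : (φ : MvPowerSeries σ R).order = n := by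
  refine le_antisymm (hφ.totalDegree h0 ▸ order_coe_le_totalDegree h0) ?_
  refine MvPowerSeries.le_order fun d hd => ?_
  rw [coeff_coe]
  exact hφ.coeff_eq_zero (by exact_mod_cast hd.ne)

theorem isHomogeneous_totalDegree_of_totalDegree_le_order {φ : MvPolynomial σ R}
    (h : (φ.totalDegree : ℕ∞) ≤ (φ : MvPowerSeries σ R).order) :
    φ.IsHomogeneous φ.totalDegree := by
  intro d hd
  have hle : (φ : MvPowerSeries σ R).order ≤ d.degree :=
    MvPowerSeries.order_le (by rwa [coeff_coe])
  rw [Pi.one_def, ← Finsupp.degree_eq_weight_one (R := ℕ)]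
  exact le_antisymm (le_totalDegree (mem_support_iff.mpr hd)) (by exact_mod_cast h.trans hle)

end Factors

section DomainFactors

variable {R : Type*} [CommRing R] [IsDomain R]

theorem IsHomogeneous.of_mul_left {φ ψ : MvPolynomial σ R} {n : ℕ}
    (h : (φ * ψ).IsHomogeneous n) (h0 : φ * ψ ≠ 0) : φ.IsHomogeneous φ.totalDegree := by
  have hφ : φ ≠ 0 := left_ne_zero_of_mul h0
  have hψ : ψ ≠ 0 := right_ne_zero_of_mul h0
  have hsum : ((φ.totalDegree + ψ.totalDegree : ℕ) : ℕ∞) =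
      (φ : MvPowerSeries σ R).order + (ψ : MvPowerSeries σ R).order := by
    rw [← MvPowerSeries.order_mul, ← coe_mul, h.order_coe h0,
      ← totalDegree_mul_of_isDomain hφ hψ, h.totalDegree h0]
  apply isHomogeneous_totalDegree_of_totalDegree_le_order
  have hφle := order_coe_le_totalDegree hφ
  have hψle := order_coe_le_totalDegree hψ
  lift (φ : MvPowerSeries σ R).order to ℕ using ne_top_of_le_ne_top (by simp) hφle with a
  lift (ψ : MvPowerSeries σ R).order to ℕ using ne_top_of_le_ne_top (by simp) hψle with b
  norm_cast at *
  omega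

theorem IsHomogeneous.of_mul_right {φ ψ : MvPolynomial σ R} {n : ℕ}
    (h : (φ * ψ).IsHomogeneous n) (h0 : φ * ψ ≠ 0) : ψ.IsHomogeneous ψ.totalDegree :=
  (mul_comm φ ψ ▸ h).of_mul_left (mul_comm φ ψ ▸ h0)

end DomainFactors

section Euler

variable [Fintype σ] {K : Type*} [Field K] [CharZero K]

theorem IsHomogeneous.exists_pderiv_ne_zero {φ : MvPolynomial σ K} {n : ℕ}
    (hφ : φ.IsHomogeneous n) (h0 : φ ≠ 0) (hn : n ≠ 0) : ∃ i, pderiv i φ ≠ 0 := by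
  by_contra! h
  have := hφ.sum_X_mul_pderiv
  simp only [h, mul_zero, Finset.sum_const_zero] at this
  exact smul_ne_zero hn h0 this.symm

theorem IsHomogeneous.dvd_of_forall_dvd_pderiv {φ g : MvPolynomial σ K} {n : ℕ}
    (hφ : φ.IsHomogeneous n) (hn : n ≠ 0) (h : ∀ i, g ∣ pderiv i φ) : g ∣ φ := by
  have hdvd : g ∣ n • φ := hφ.sum_X_mul_pderiv ▸ Finset.dvd_sum fun i _ => (h i).mul_left _
  have hu : IsUnit (C (n : K) : MvPolynomial σ K) := (Nat.cast_ne_zero.mpr hn).isUnit.map C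
  rwa [← Nat.cast_smul_eq_nsmul K, smul_eq_C_mul, hu.dvd_mul_left] at hdvd

theorem IsHomogeneous.sq_dvd_of_forall_dvd_pderiv {F g : MvPolynomial σ K} {n : ℕ}
    (hF : F.IsHomogeneous n) (hn : n ≠ 0) (hg : Prime g) (h : ∀ i, g ∣ pderiv i F) :
    g ^ 2 ∣ F := by
  obtain ⟨q, rfl⟩ := hF.dvd_of_forall_dvd_pderiv hn h
  rcases eq_or_ne (g * q) 0 with h0 | h0
  · simp [h0]
  have hgh : g.IsHomogeneous g.totalDegree := hF.of_mul_left h0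
  have hdeg := totalDegree_ne_zero_of_prime hg
  obtain ⟨i, hi⟩ := hgh.exists_pderiv_ne_zero hg.ne_zero hdeg
  have hndvd : ¬ g ∣ pderiv i g := fun hdvd => by
    have := totalDegree_le_of_dvd_of_isDomain hdvd hi
    rw [(hgh.pderiv (i := i)).totalDegree hi] at this
    omega
  have hdvd : g ∣ pderiv i g * q := by
    have := h i
    rwa [pderiv_mul, dvd_add_left (dvd_mul_right _ _)] at this
  rw [sq]
  exact mul_dvd_mul_left g ((hg.dvd_or_dvd hdvd).resolve_left hndvd)

end Euler

end MvPolynomial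

theorem SGR_eq_height_jacobianIdeal {σ : Type*} (F : MvPolynomial σ ℂ) :
    SGR F = (jacobianIdeal F).height :=
  idealHeight_eq_height _

theorem exists_eq_sq_mul_of_height_jacobianIdeal_eq_one {σ : Type*} [Fintype σ]
    {F : MvPolynomial σ ℂ} (hF0 : F ≠ 0) (hF : F.IsHomogeneous 3)
    (h1 : (jacobianIdeal F).height = 1) :
    ∃ L M : MvPolynomial σ ℂ, L.IsHomogeneous 1 ∧ M.IsHomogeneous 1 ∧ F = L ^ 2 * M := by
  obtain ⟨g, hg, hdvd⟩ := Ideal.exists_prime_forall_dvd_of_height_eq_one h1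
  obtain ⟨M, rfl⟩ := hF.sq_dvd_of_forall_dvd_pderiv three_ne_zero hg
    fun i => hdvd _ (Ideal.subset_span ⟨i, rfl⟩)
  have hM : M ≠ 0 := right_ne_zero_of_mul hF0
  have hdeg : 2 * g.totalDegree + M.totalDegree = 3 := by
    rw [← hF.totalDegree hF0, sq,
      totalDegree_mul_of_isDomain (mul_ne_zero hg.ne_zero hg.ne_zero) hM,
      totalDegree_mul_of_isDomain hg.ne_zero hg.ne_zero]
    ring
  have hg1 : g.totalDegree = 1 := by have := totalDegree_ne_zero_of_prime hg; omega
  have hM1 : M.totalDegree = 1 := by omega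
  refine ⟨g, M, ?_, hM1 ▸ hF.of_mul_right hF0, rfl⟩
  rw [sq, mul_assoc] at hF hF0
  exact hg1 ▸ hF.of_mul_left hF0

theorem height_jacobianIdeal_sq_mul {σ : Type*} [Fintype σ] {L M : MvPolynomial σ ℂ}
    (hL : L.IsHomogeneous 1) (hM : M.IsHomogeneous 1) (hL0 : L ≠ 0) (hM0 : M ≠ 0) :
    (jacobianIdeal (L ^ 2 * M)).height = 1 := by
  have hF0 : L ^ 2 * M ≠ 0 := mul_ne_zero (pow_ne_zero 2 hL0) hM0
  have hF : (L ^ 2 * M).IsHomogeneous 3 := (hL.pow 2).mul hM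
  have hle : jacobianIdeal (L ^ 2 * M) ≤ Ideal.span {L} := by
    refine Ideal.span_le.mpr ?_
    rintro _ ⟨i, rfl⟩
    refine Ideal.mem_span_singleton.mpr ⟨2 * pderiv i L * M + L * pderiv i M, ?_⟩
    simp only [pderiv_mul, pderiv_pow]
    ring
  have hLunit : ¬ IsUnit L := by
    rw [isUnit_iff_totalDegree_eq_zero hL0, hL.totalDegree hL0]
    exact one_ne_zero
  have hne : jacobianIdeal (L ^ 2 * M) ≠ ⊥ := by
    obtain ⟨i, hi⟩ := hF.exists_pderiv_ne_zero hF0 three_ne_zero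
    intro h
    have hmem : pderiv i (L ^ 2 * M) ∈ jacobianIdeal (L ^ 2 * M) := Ideal.subset_span ⟨i, rfl⟩
    exact hi (by rwa [h, Ideal.mem_bot] at hmem)
  refine le_antisymm ((Ideal.height_mono hle).trans (Ideal.height_span_singleton_le_one hLunit)) ?_
  rwa [Order.one_le_iff_pos, pos_iff_ne_zero, Ne, Ideal.height_eq_zero_iff_eq_bot]

/-- a nonzero homogeneous cubic has singular locus of codimension 1
iff it is of the form `L² M` for linear forms; these are exactly the points of the
tangential variety of the third Veronese variety. -/
theorem stmt8 (n : ℕ) :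
    (∀ F : MvPolynomial (Fin (n + 1)) ℂ, F ≠ 0 → F.IsHomogeneous 3 → SGR F = 1 →
      ∃ L M : MvPolynomial (Fin (n + 1)) ℂ,
        L.IsHomogeneous 1 ∧ M.IsHomogeneous 1 ∧ F = L ^ 2 * M) ∧
    (∀ L M : MvPolynomial (Fin (n + 1)) ℂ, L.IsHomogeneous 1 → M.IsHomogeneous 1 →
      LinearIndependent ℂ ![L, M] → SGR (L ^ 2 * M) = 1) := by
  refine ⟨fun F hF0 hF h1 => ?_, fun L M hL hM hLM => ?_⟩
  · rw [SGR_eq_height_jacobianIdeal] at h1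
    exact exists_eq_sq_mul_of_height_jacobianIdeal_eq_one hF0 hF h1
  · rw [SGR_eq_height_jacobianIdeal]
    exact height_jacobianIdeal_sq_mul hL hM (by simpa using hLM.ne_zero 0)
      (by simpa using hLM.ne_zero 1)
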